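/- The trivial real 2-uniform (n,1)- and (n,n−1)-frames (those whose signature matrices are J_n − I_n and I_n − J_n, respectively) are 3-uniform. Conversely, if F is a real 3-uniform (n,k)-frame then k = 1 or k = n−1, and G_F is switching equivalent to the edgeless graph or to the complete graph on n vertices, respectively. -/

import Mathlib

open Matrix
open scoped Classical

noncomputable section

namespace FramesErasures

/-- The constant `c_{n,k} = sqrt(k(n-k)/(n^2(n-1)))`. -/
noncomputable def c (n k : ℕ) : ℝ :=
  Real.sqrt ((k : ℝ) * ((n : ℝ) - k) / ((n : ℝ) ^ 2 * ((n : ℝ) - 1)))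

/-- Operator norm (ℓ²→ℓ²) of a square real matrix. -/
noncomputable def opNorm {k : ℕ} (A : Matrix (Fin k) (Fin k) ℝ) : ℝ :=
  ‖Matrix.toEuclideanCLM (𝕜 := ℝ) A‖

/-- The diagonal 0-1 matrix with 1's exactly at the positions in `S`. -/
def diagS {n : ℕ} (S : Finset (Fin n)) : Matrix (Fin n) (Fin n) ℝ :=
  Matrix.diagonal fun i => if i ∈ S then 1 else 0

/-- `e_m^∞(F)`: the maximal norm of an error operator for `m` erasures. -/
noncomputable def errInf {n k : ℕ} (V : Matrix (Fin n) (Fin k) ℝ) (m : ℕ) : ℝ :=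
  sSup {x : ℝ | ∃ S : Finset (Fin n), S.card = m ∧ x = opNorm (Vᵀ * diagS S * V)}

/-- `e_m^p(F)`: the ℓᵖ-average of the norms of the error operators for `m` erasures. -/
noncomputable def errP {n k : ℕ} (V : Matrix (Fin n) (Fin k) ℝ) (m : ℕ) (p : ℝ) : ℝ :=
  ((n.choose m : ℝ)⁻¹ *
      ∑ S ∈ Finset.univ.filter fun S : Finset (Fin n) => S.card = m,
        opNorm (Vᵀ * diagS S * V) ^ p) ^ (1 / p)

/-- A Parseval frame is uniform if all diagonal Grammian entries equal `k/n`. -/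
def Uniform (n k : ℕ) (V : Matrix (Fin n) (Fin k) ℝ) : Prop :=
  ∀ j, (V * Vᵀ) j j = (k : ℝ) / n

/-- 2-uniformity, via the equiangularity characterization. -/
def TwoUniform (n k : ℕ) (V : Matrix (Fin n) (Fin k) ℝ) : Prop :=
  Uniform n k V ∧ ∀ i j, i ≠ j → |(V * Vᵀ) i j| = c n k

/-- The `n×n` all-ones matrix. -/
def Jmat (n : ℕ) : Matrix (Fin n) (Fin n) ℝ :=
  Matrix.of fun _ _ => 1

/-- A real 2-uniform `(n,k)`-frame, given by its analysis operator and signature matrix. -/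
structure TwoUniformFrame (n k : ℕ) where
  V : Matrix (Fin n) (Fin k) ℝ
  Q : Matrix (Fin n) (Fin n) ℝ
  parseval : Vᵀ * V = 1
  symm : Qᵀ = Q
  diag : ∀ i, Q i i = 0
  offdiag : ∀ i j, i ≠ j → Q i j = 1 ∨ Q i j = -1
  gram : V * Vᵀ = ((k : ℝ) / n) • (1 : Matrix (Fin n) (Fin n) ℝ) + c n k • Q

/-- The graph associated with a 2-uniform frame: `i ≠ j` adjacent iff `Q i j = -1`. -/
def frameGraph {n k : ℕ} (F : TwoUniformFrame n k) : SimpleGraph (Fin n) where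
  Adj i j := i ≠ j ∧ F.Q i j = -1
  symm := ⟨by
    intro i j h
    refine ⟨h.1.symm, ?_⟩
    have h2 : F.Q i j = F.Q j i := by
      have := congrFun (congrFun F.symm j) i
      simpa [Matrix.transpose_apply] using this
    rw [← h2]
    exact h.2⟩
  loopless := ⟨fun i h => h.1 rfl⟩

/-- A graph is complete bipartite (with one part possibly empty). -/
def IsCompleteBipartite {α : Type*} (G : SimpleGraph α) : Prop :=
  ∃ A : Set α, ∀ i j, G.Adj i j ↔ ((i ∈ A) ↔ (j ∉ A))

/-- `G` has an induced complete bipartite subgraph on `m` vertices. -/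
def HasInducedCompleteBipartite {n : ℕ} (G : SimpleGraph (Fin n)) (m : ℕ) : Prop :=
  ∃ S : Finset (Fin n), S.card = m ∧
    IsCompleteBipartite (G.induce (S : Set (Fin n)))

/-- The Seidel adjacency matrix of a graph. -/
noncomputable def seidel {α : Type*} [DecidableEq α] (G : SimpleGraph α) : Matrix α α ℝ :=
  Matrix.of fun i j => if i = j then 0 else if G.Adj i j then -1 else 1

/-- Switching equivalence of graphs: Seidel matrices conjugate by a product of a permutation
and a `±1` diagonal matrix. -/
def SwitchingEquivalent {α : Type*} [DecidableEq α] (G H : SimpleGraph α) : Prop :=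
  ∃ (σ : Equiv.Perm α) (ε : α → ℝ), (∀ i, ε i = 1 ∨ ε i = -1) ∧
    ∀ i j, seidel H i j = ε i * ε j * seidel G (σ i) (σ j)

/-- `G ∈ 𝒢_m^(s)`: the minimal number of edges in the switching class of `G` equals `s`. -/
def MinSwitchEdges {α : Type*} [DecidableEq α] (G : SimpleGraph α) (s : ℕ) : Prop :=
  IsLeast {t : ℕ | ∃ H : SimpleGraph α, SwitchingEquivalent G H ∧ H.edgeSet.ncard = t} s

/-- `lam` is the largest eigenvalue of the real matrix `A`. -/
def IsMaxEigenvalue {m : ℕ} (A : Matrix (Fin m) (Fin m) ℝ) (lam : ℝ) : Prop :=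
  (∃ v : Fin m → ℝ, v ≠ 0 ∧ A.mulVec v = lam • v) ∧
  ∀ μ : ℝ, (∃ v : Fin m → ℝ, v ≠ 0 ∧ A.mulVec v = μ • v) → μ ≤ lam

/-- A 2-uniform frame is 3-uniform if the error norm is the same for all triple erasures. -/
def ThreeUniform {n k : ℕ} (F : TwoUniformFrame n k) : Prop :=
  ∀ S T : Finset (Fin n), S.card = 3 → T.card = 3 →
    opNorm (F.Vᵀ * diagS S * F.V) = opNorm (F.Vᵀ * diagS T * F.V)

/-!
Write `G = V Vᵀ = (k/n) I + c Q` and `D = diagS S`. By the C*-identity,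
`‖Vᵀ D V‖ = ‖(D V)ᵀ (D V)‖ = ‖(D V)(D V)ᵀ‖ = ‖D G D‖`. If on `S` the signature matrix is a
switching of `δ (J - I)`, i.e. `Q a b = δ ε a ε b` with signs `ε`, then
`D G D = (k/n) D + c δ (u uᵀ - D)` with `u = D ε`, whose largest eigenvalue is
`k/n + c (|S| - 1)` if `δ = 1` and `k/n + c` if `δ = -1`. Every triple `{i, j, l}` is such a
switching with `δ = Q i j Q i l Q j l`, so the norm for three erasures is `k/n + c (3 + δ)/2`.

Hence, as `c > 0`, 3-uniformity forces all triple products to be equal, and then `Q` is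
globally a switching of `δ (J - I)`. Comparing off-diagonal entries in `G² = G` gives
`2k/n + (n - 2) c δ = 1`, whose only solutions are `δ = 1, k = 1` and `δ = -1, k = n - 1`.
-/

lemma norm_toLp_sq {m : Type*} [Fintype m] (x : m → ℝ) :
    ‖WithLp.toLp 2 x‖ ^ 2 = x ⬝ᵥ x := by
  rw [EuclideanSpace.real_norm_sq_eq]
  simp [dotProduct, sq]

open scoped Matrix.Norms.L2Operator in
lemma opNorm_transpose_mul_self_eq {m l : ℕ} (A : Matrix (Fin m) (Fin l) ℝ) {t : ℝ}
    (ht : 0 ≤ t) (hle : ∀ x, x ⬝ᵥ (A * Aᵀ) *ᵥ x ≤ t * (x ⬝ᵥ x)) {u : Fin m → ℝ} (hu : u ≠ 0)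
    (hAu : (A * Aᵀ) *ᵥ u = t • u) : opNorm (Aᵀ * A) = t := by
  have hAAt : ‖A * Aᵀ‖ = ‖Aᵀ‖ * ‖Aᵀ‖ := by
    simpa [conjTranspose_eq_transpose_of_trivial] using l2_opNorm_conjTranspose_mul_self Aᵀ
  have hnorm : opNorm (Aᵀ * A) = ‖A * Aᵀ‖ := by
    rw [opNorm, l2_opNorm_toEuclideanCLM, hAAt, ← conjTranspose_eq_transpose_of_trivial,
      l2_opNorm_conjTranspose_mul_self, l2_opNorm_conjTranspose]
  have hupper : ‖Aᵀ‖ ≤ √t := by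
    rw [l2_opNorm_def]
    refine ContinuousLinearMap.opNorm_le_bound _ (Real.sqrt_nonneg t) fun x => ?_
    obtain ⟨y, rfl⟩ : ∃ y, WithLp.toLp 2 y = x := ⟨x.ofLp, rfl⟩
    have hsq : ‖WithLp.toLp 2 (Aᵀ *ᵥ y)‖ ^ 2 ≤ (√t * ‖WithLp.toLp 2 y‖) ^ 2 := by
      rw [mul_pow, Real.sq_sqrt ht, norm_toLp_sq, norm_toLp_sq]
      refine (hle y).trans_eq' ?_
      rw [← mulVec_mulVec, dotProduct_mulVec, ← mulVec_transpose]
    exact (pow_le_pow_iff_left₀ (norm_nonneg _) (by positivity) two_ne_zero).mp hsq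
  have hlower : |t| * ‖WithLp.toLp 2 u‖ ≤ ‖A * Aᵀ‖ * ‖WithLp.toLp 2 u‖ := by
    have := l2_opNorm_mulVec (A * Aᵀ) (WithLp.toLp 2 u)
    simpa [hAu, norm_smul] using this
  have hu' : 0 < ‖WithLp.toLp 2 u‖ := by simpa using hu
  rw [hnorm]
  refine le_antisymm ?_ ((le_abs_self t).trans (le_of_mul_le_mul_right hlower hu'))
  rw [hAAt]
  calc ‖Aᵀ‖ * ‖Aᵀ‖ ≤ √t * √t := mul_self_le_mul_self (norm_nonneg _) hupper
    _ = t := Real.mul_self_sqrt ht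

section Erasure

variable {n : ℕ}

lemma diagS_transpose (S : Finset (Fin n)) : (diagS S)ᵀ = diagS S :=
  diagonal_transpose _

lemma diagS_mul_diagS (S : Finset (Fin n)) : diagS S * diagS S = diagS S := by
  simp only [diagS, diagonal_mul_diagonal]
  congr 1
  ext a
  split_ifs <;> simp

lemma diagS_mulVec_apply (S : Finset (Fin n)) (x : Fin n → ℝ) (a : Fin n) :
    (diagS S *ᵥ x) a = if a ∈ S then x a else 0 := by
  simp [diagS, mulVec_diagonal]

lemma dotProduct_diagS_mulVec (S : Finset (Fin n)) (x y : Fin n → ℝ) :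
    x ⬝ᵥ diagS S *ᵥ y = ∑ a ∈ S, x a * y a := by
  simp [dotProduct, diagS_mulVec_apply, Finset.sum_ite_mem]

lemma diagS_mulVec_dotProduct (S : Finset (Fin n)) (x y : Fin n → ℝ) :
    diagS S *ᵥ x ⬝ᵥ y = ∑ a ∈ S, x a * y a := by
  simp [dotProduct, diagS_mulVec_apply, Finset.sum_ite_mem]

lemma diagS_mulVec_dotProduct_self {S : Finset (Fin n)} {ε : Fin n → ℝ}
    (hε : ∀ a, ε a * ε a = 1) :
    diagS S *ᵥ ε ⬝ᵥ diagS S *ᵥ ε = S.card := by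
  rw [diagS_mulVec_dotProduct, Finset.card_eq_sum_ones, Nat.cast_sum]
  refine Finset.sum_congr rfl fun a ha => ?_
  simp [diagS_mulVec_apply, ha, hε]

lemma diagS_mulVec_ne_zero {S : Finset (Fin n)} (hS : S.Nonempty) {ε : Fin n → ℝ}
    (hε : ∀ a, ε a * ε a = 1) : diagS S *ᵥ ε ≠ 0 := by
  obtain ⟨a, ha⟩ := hS
  intro h
  have hua := congrFun h a
  rw [diagS_mulVec_apply, if_pos ha] at hua
  simpa [hua] using hε a

lemma dotProduct_diagS_mulVec_le (S : Finset (Fin n)) (x : Fin n → ℝ) :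
    x ⬝ᵥ diagS S *ᵥ x ≤ x ⬝ᵥ x := by
  rw [dotProduct_diagS_mulVec]
  exact Finset.sum_le_sum_of_subset_of_nonneg (Finset.subset_univ S)
    fun a _ _ => mul_self_nonneg (x a)

lemma sq_diagS_mulVec_dotProduct_le {S : Finset (Fin n)} {ε : Fin n → ℝ}
    (hε : ∀ a, ε a * ε a = 1) (x : Fin n → ℝ) :
    (diagS S *ᵥ ε ⬝ᵥ x) ^ 2 ≤ S.card * (x ⬝ᵥ diagS S *ᵥ x) := by
  have hcs := Finset.sum_mul_sq_le_sq_mul_sq S ε x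
  rw [diagS_mulVec_dotProduct, dotProduct_diagS_mulVec]
  simpa [sq, hε] using hcs

lemma diagS_mul_mul_diagS {Q : Matrix (Fin n) (Fin n) ℝ} (hdiag : ∀ a, Q a a = 0)
    {S : Finset (Fin n)} {δ : ℝ} {ε : Fin n → ℝ} (hε : ∀ a, ε a * ε a = 1)
    (hS : ∀ a ∈ S, ∀ b ∈ S, a ≠ b → Q a b = δ * (ε a * ε b)) :
    diagS S * Q * diagS S =
      δ • (vecMulVec (diagS S *ᵥ ε) (diagS S *ᵥ ε) - diagS S) := by
  ext a b
  simp only [Matrix.smul_apply, Matrix.sub_apply, vecMulVec_apply, diagS_mulVec_apply]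
  simp only [diagS, mul_diagonal, diagonal_mul, diagonal_apply, smul_eq_mul]
  by_cases hab : a = b
  · subst hab
    by_cases ha : a ∈ S <;> simp [ha, hdiag, hε]
  · by_cases ha : a ∈ S <;> by_cases hb : b ∈ S <;> simp [ha, hb, hab]
    exact hS a ha b hb hab

end Erasure

lemma exists_signs_of_triple_products_eq {ι : Type*} [DecidableEq ι] {Q : Matrix ι ι ℝ}
    (hQ : Q.IsSymm) (hsq : ∀ a b, a ≠ b → Q a b * Q a b = 1) {δ : ℝ} (hδ : δ * δ = 1)
    {S : Finset ι} (i : ι)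
    (h : ∀ a ∈ S, ∀ b ∈ S, i ≠ a → i ≠ b → a ≠ b → Q i a * Q i b * Q a b = δ) :
    ∃ ε : ι → ℝ, (∀ a, ε a * ε a = 1) ∧ ∀ a ∈ S, ∀ b ∈ S, a ≠ b → Q a b = δ * (ε a * ε b) := by
  -- switch each vertex `a ≠ i` by the sign `δ Q i a`
  refine ⟨fun a => if a = i then 1 else δ * Q i a, fun a => ?_, fun a ha b hb hab => ?_⟩
  · dsimp only
    split_ifs with hai
    · ring
    · linear_combination (Q i a * Q i a) * hδ + hsq i a (Ne.symm hai)
  · by_cases hai : a = i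
    · subst hai
      simp only [if_pos, if_neg (Ne.symm hab)]
      linear_combination (-Q a b) * hδ
    by_cases hbi : b = i
    · subst hbi
      simp only [if_pos, if_neg hai]
      linear_combination (-Q b a) * hδ + hQ.apply b a
    simp only [if_neg hai, if_neg hbi]
    have hab' := h a ha b hb (Ne.symm hai) (Ne.symm hbi) hab
    linear_combination (-Q a b) * hsq i a (Ne.symm hai)
      - Q a b * Q i a * Q i a * hsq i b (Ne.symm hbi) + Q i a * Q i b * hab'
      - δ * Q i a * Q i b * hδ

lemma c_nonneg (n k : ℕ) : 0 ≤ c n k := Real.sqrt_nonneg _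

lemma c_pos {n k : ℕ} (hk : 1 ≤ k) (hkn : k < n) : 0 < c n k := by
  have hK : (1 : ℝ) ≤ k := by exact_mod_cast hk
  have hKN : (k : ℝ) + 1 ≤ n := by exact_mod_cast hkn
  exact Real.sqrt_pos.mpr (div_pos (mul_pos (by linarith) (by linarith))
    (mul_pos (pow_pos (by linarith) 2) (by linarith)))

lemma c_sq_mul {n k : ℕ} (hk : 1 ≤ k) (hkn : k < n) :
    c n k ^ 2 * (n ^ 2 * (n - 1)) = k * (n - k) := by
  have hK : (1 : ℝ) ≤ k := by exact_mod_cast hk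
  have hKN : (k : ℝ) + 1 ≤ n := by exact_mod_cast hkn
  rw [c, Real.sq_sqrt (div_nonneg (mul_nonneg (by linarith) (by linarith))
    (mul_nonneg (by positivity) (by linarith)))]
  exact div_mul_cancel₀ _ (mul_pos (pow_pos (by linarith) 2) (by linarith)).ne'

lemma eq_one_or_eq_sub_one_of_two_mul_div_add_eq_one {n k : ℕ} (hn : 3 ≤ n) (hk : 1 ≤ k)
    (hkn : k < n) {δ : ℝ} (hδ : δ = 1 ∨ δ = -1)
    (h : 2 * ((k : ℝ) / n) + (n - 2) * c n k * δ = 1) :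
    (δ = 1 ∧ k = 1) ∨ (δ = -1 ∧ k = n - 1) := by
  have hN : (3 : ℝ) ≤ n := by exact_mod_cast hn
  have hc := c_pos hk hkn
  have hlin : c n k * δ * (n * (n - 2)) = n - 2 * k := by
    have hn0 : (n : ℝ) ≠ 0 := by positivity
    field_simp at h
    linear_combination h
  have hδ2 : δ * δ = 1 := mul_self_eq_one_iff.mpr hδ
  have hquad : (n : ℝ) ^ 2 * ((k - 1) * (k - (n - 1))) = 0 := by
    linear_combination (-(n - 1) * (c n k * δ * (n * (n - 2)) + n - 2 * k)) * hlin
      + ((n - 2) ^ 2 * c n k ^ 2 * n ^ 2 * (n - 1)) * hδ2 + (n - 2) ^ 2 * c_sq_mul hk hkn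
  have hpos : 0 < c n k * (n * (n - 2)) := mul_pos hc (mul_pos (by linarith) (by linarith))
  rcases mul_eq_zero.mp ((mul_eq_zero.mp hquad).resolve_left (by positivity)) with hk1 | hk1
  · left
    refine ⟨hδ.resolve_right fun h1 => ?_, by exact_mod_cast (sub_eq_zero.mp hk1)⟩
    rw [h1] at hlin
    nlinarith
  · right
    refine ⟨hδ.resolve_left fun h1 => ?_, ?_⟩
    · rw [h1] at hlin
      nlinarith
    · have : (k : ℝ) + 1 = n := by linear_combination hk1
      have : k + 1 = n := by exact_mod_cast this
      omega

namespace TwoUniformFrame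

variable {n k : ℕ} (F : TwoUniformFrame n k)

lemma erasure_eq_transpose_mul_self (S : Finset (Fin n)) :
    F.Vᵀ * diagS S * F.V = (diagS S * F.V)ᵀ * (diagS S * F.V) := by
  rw [transpose_mul, diagS_transpose, Matrix.mul_assoc, Matrix.mul_assoc,
    ← Matrix.mul_assoc (diagS S) (diagS S), diagS_mul_diagS]

lemma erasure_gram_eq {S : Finset (Fin n)} {δ : ℝ} {ε : Fin n → ℝ} (hε : ∀ a, ε a * ε a = 1)
    (hS : ∀ a ∈ S, ∀ b ∈ S, a ≠ b → F.Q a b = δ * (ε a * ε b)) :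
    diagS S * F.V * (diagS S * F.V)ᵀ =
      ((k : ℝ) / n) • diagS S +
        (c n k * δ) • (vecMulVec (diagS S *ᵥ ε) (diagS S *ᵥ ε) - diagS S) := by
  have hgram : diagS S * F.V * (diagS S * F.V)ᵀ = diagS S * (F.V * F.Vᵀ) * diagS S := by
    simp only [transpose_mul, diagS_transpose, Matrix.mul_assoc]
  rw [hgram, F.gram, Matrix.mul_add, Matrix.add_mul, Matrix.mul_smul, Matrix.smul_mul,
    Matrix.mul_one, diagS_mul_diagS, Matrix.mul_smul, Matrix.smul_mul,
    diagS_mul_mul_diagS F.diag hε hS, smul_smul]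

lemma opNorm_erasure_of_eq_mul {S : Finset (Fin n)} (hSne : S.Nonempty) {ε : Fin n → ℝ}
    (hε : ∀ a, ε a * ε a = 1) (hS : ∀ a ∈ S, ∀ b ∈ S, a ≠ b → F.Q a b = ε a * ε b) :
    opNorm (F.Vᵀ * diagS S * F.V) = k / n + c n k * (S.card - 1) := by
  have hM := F.erasure_gram_eq (δ := 1) hε (by simpa using hS)
  have hc := c_nonneg n k
  set u := diagS S *ᵥ ε
  have hDu : diagS S *ᵥ u = u := by rw [mulVec_mulVec, diagS_mul_diagS]
  have huu : u ⬝ᵥ u = S.card := diagS_mulVec_dotProduct_self hε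
  have hcard : (1 : ℝ) ≤ S.card := by exact_mod_cast hSne.card_pos
  have ht : 0 ≤ (k : ℝ) / n + c n k * (S.card - 1) := by
    have : (0 : ℝ) ≤ S.card - 1 := by linarith
    positivity
  rw [erasure_eq_transpose_mul_self]
  refine opNorm_transpose_mul_self_eq _ ht (fun x => ?_) (u := u)
    (diagS_mulVec_ne_zero hSne hε) ?_
  · have hcs : (u ⬝ᵥ x) ^ 2 ≤ S.card * (x ⬝ᵥ diagS S *ᵥ x) := sq_diagS_mulVec_dotProduct_le hε x
    have hle := mul_le_mul_of_nonneg_left (dotProduct_diagS_mulVec_le S x) ht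
    simp only [hM, add_mulVec, smul_mulVec, sub_mulVec, vecMulVec_mulVec, dotProduct_add,
      dotProduct_smul, dotProduct_sub, op_smul_eq_smul, smul_eq_mul, mul_one]
    rw [dotProduct_comm x u]
    nlinarith [mul_le_mul_of_nonneg_left hcs hc]
  · simp only [hM, add_mulVec, smul_mulVec, sub_mulVec, vecMulVec_mulVec, hDu, huu,
      op_smul_eq_smul, mul_one]
    module

lemma opNorm_erasure_of_eq_neg_mul {S : Finset (Fin n)} (hcard : 1 < S.card) {ε : Fin n → ℝ}
    (hε : ∀ a, ε a * ε a = 1) (hS : ∀ a ∈ S, ∀ b ∈ S, a ≠ b → F.Q a b = -(ε a * ε b)) :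
    opNorm (F.Vᵀ * diagS S * F.V) = k / n + c n k := by
  have hM := F.erasure_gram_eq (δ := -1) hε (by simpa using hS)
  have hc := c_nonneg n k
  have ht : 0 ≤ (k : ℝ) / n + c n k := by positivity
  obtain ⟨i, hi, j, hj, hij⟩ := Finset.one_lt_card.mp hcard
  set u := diagS S *ᵥ ε
  -- `w` lies in the range of `diagS S` and is orthogonal to `u`
  set w : Fin n → ℝ := Pi.single i (ε i) - Pi.single j (ε j)
  have hw : w ≠ 0 := fun h => by
    have hwi := congrFun h i
    simp only [w, Pi.sub_apply, Pi.single_eq_same, Pi.single_eq_of_ne hij, sub_zero,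
      Pi.zero_apply] at hwi
    simpa [hwi] using hε i
  have hDw : diagS S *ᵥ w = w := by
    ext a
    rw [diagS_mulVec_apply]
    split_ifs with ha
    · rfl
    · simp [w, show a ≠ i by rintro rfl; exact ha hi,
        show a ≠ j by rintro rfl; exact ha hj]
  have huw : u ⬝ᵥ w = 0 := by
    simp only [w, dotProduct_sub, dotProduct_single, u, diagS_mulVec_apply, if_pos hi, if_pos hj,
      hε, sub_self]
  rw [erasure_eq_transpose_mul_self]
  refine opNorm_transpose_mul_self_eq _ ht (fun x => ?_) hw ?_
  · have hle := mul_le_mul_of_nonneg_left (dotProduct_diagS_mulVec_le S x) ht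
    simp only [hM, add_mulVec, smul_mulVec, sub_mulVec, vecMulVec_mulVec, dotProduct_add,
      dotProduct_smul, dotProduct_sub, op_smul_eq_smul, smul_eq_mul]
    rw [dotProduct_comm x u]
    nlinarith [mul_nonneg hc (mul_self_nonneg (u ⬝ᵥ x))]
  · simp only [hM, add_mulVec, smul_mulVec, sub_mulVec, vecMulVec_mulVec, hDw, huw,
      op_smul_eq_smul, zero_smul]
    module

lemma Q_mul_self {a b : Fin n} (hab : a ≠ b) : F.Q a b * F.Q a b = 1 :=
  mul_self_eq_one_iff.mpr (F.offdiag a b hab)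

lemma triple_product_mul_self {i j l : Fin n} (hij : i ≠ j) (hil : i ≠ l) (hjl : j ≠ l) :
    F.Q i j * F.Q i l * F.Q j l * (F.Q i j * F.Q i l * F.Q j l) = 1 := by
  linear_combination (F.Q i l * F.Q i l * F.Q j l * F.Q j l) * F.Q_mul_self hij
    + F.Q j l * F.Q j l * F.Q_mul_self hil + F.Q_mul_self hjl

lemma opNorm_erasure_triple {i j l : Fin n} (hij : i ≠ j) (hil : i ≠ l) (hjl : j ≠ l) :
    opNorm (F.Vᵀ * diagS {i, j, l} * F.V) =
      k / n + c n k * (3 + F.Q i j * F.Q i l * F.Q j l) / 2 := by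
  have hsymm : F.Q.IsSymm := F.symm
  obtain ⟨ε, hε, hS⟩ := exists_signs_of_triple_products_eq (S := {i, j, l}) hsymm
    (fun a b => F.Q_mul_self) (F.triple_product_mul_self hij hil hjl) i <| by
      simp only [Finset.mem_insert, Finset.mem_singleton]
      rintro a (rfl | rfl | rfl) b (rfl | rfl | rfl) <;> intro ha hb hab <;>
        first | exact absurd rfl ‹_› | rfl | (rw [hsymm.apply b a]; ring)
  have hcard : ({i, j, l} : Finset (Fin n)).card = 3 :=
    Finset.card_eq_three.mpr ⟨i, j, l, hij, hil, hjl, rfl⟩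
  rcases mul_self_eq_one_iff.mp (F.triple_product_mul_self hij hil hjl) with hp | hp <;>
    rw [hp] at hS ⊢
  · rw [F.opNorm_erasure_of_eq_mul (Finset.insert_nonempty _ _) hε (by simpa using hS), hcard]
    ring
  · rw [F.opNorm_erasure_of_eq_neg_mul (by omega) hε (by simpa using hS)]
    ring

lemma triple_products_eq_of_threeUniform (hF : ThreeUniform F) (hc : c n k ≠ 0)
    {i j l i' j' l' : Fin n} (hij : i ≠ j) (hil : i ≠ l) (hjl : j ≠ l)
    (hij' : i' ≠ j') (hil' : i' ≠ l') (hjl' : j' ≠ l') :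
    F.Q i j * F.Q i l * F.Q j l = F.Q i' j' * F.Q i' l' * F.Q j' l' := by
  have h := hF {i, j, l} {i', j', l'} (Finset.card_eq_three.mpr ⟨i, j, l, hij, hil, hjl, rfl⟩)
    (Finset.card_eq_three.mpr ⟨i', j', l', hij', hil', hjl', rfl⟩)
  rw [F.opNorm_erasure_triple hij hil hjl, F.opNorm_erasure_triple hij' hil' hjl'] at h
  have h' : c n k * (F.Q i j * F.Q i l * F.Q j l - F.Q i' j' * F.Q i' l' * F.Q j' l') = 0 := by
    linear_combination 2 * h
  exact sub_eq_zero.mp ((mul_eq_zero.mp h').resolve_left hc)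

lemma gram_idempotent : F.V * F.Vᵀ * (F.V * F.Vᵀ) = F.V * F.Vᵀ := by
  rw [Matrix.mul_assoc, ← Matrix.mul_assoc F.Vᵀ, F.parseval, Matrix.one_mul]

lemma two_mul_div_add_eq_one_of_signs {δ : ℝ} (hδ : δ * δ = 1) {ε : Fin n → ℝ}
    (hε : ∀ a, ε a * ε a = 1) (hQ : ∀ a b, a ≠ b → F.Q a b = δ * (ε a * ε b))
    {i j : Fin n} (hij : i ≠ j) (hc : c n k ≠ 0) :
    2 * ((k : ℝ) / n) + (n - 2) * c n k * δ = 1 := by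
  set α : ℝ := k / n
  set β : ℝ := c n k * δ
  set E := vecMulVec ε ε
  have hG : F.V * F.Vᵀ = (α - β) • (1 : Matrix (Fin n) (Fin n) ℝ) + β • E := by
    rw [F.gram]
    ext a b
    by_cases hab : a = b
    · subst hab
      simp [F.diag, E, vecMulVec_apply, hε, α]
    · simp [one_apply_ne hab, hQ a b hab, E, vecMulVec_apply, β]
      ring
  have hEE : E * E = (n : ℝ) • E := by
    have hεε : ε ⬝ᵥ ε = n := by simp [dotProduct, hε]
    rw [vecMulVec_mul_vecMulVec, hεε, vecMulVec_smul]
  have h := F.gram_idempotent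
  rw [hG] at h
  have hij' := congrFun (congrFun h i) j
  simp only [add_mul, mul_add, Matrix.smul_mul, Matrix.mul_smul, Matrix.one_mul, Matrix.mul_one,
    hEE, smul_smul, Matrix.add_apply, Matrix.smul_apply, one_apply_ne hij, E, vecMulVec_apply,
    smul_eq_mul] at hij'
  have hεij : ε i * ε j ≠ 0 := left_ne_zero_of_mul_eq_one (b := ε i * ε j) <| by
    linear_combination ε j * ε j * hε i + hε j
  have hβ : β ≠ 0 := mul_ne_zero hc fun h0 => by simp [h0] at hδ
  have hcoeff : ε i * ε j * β * (2 * α + (n - 2) * β - 1) = 0 := by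
    linear_combination hij'
  have := (mul_eq_zero.mp hcoeff).resolve_left (mul_ne_zero hεij hβ)
  linear_combination this

lemma exists_signs_of_threeUniform (hF : ThreeUniform F) (hc : c n k ≠ 0) (hn : 3 ≤ n) :
    ∃ δ : ℝ, (δ = 1 ∨ δ = -1) ∧ ∃ ε : Fin n → ℝ, (∀ a, ε a * ε a = 1) ∧
      ∀ a b, a ≠ b → F.Q a b = δ * (ε a * ε b) := by
  let i₀ : Fin n := ⟨0, by omega⟩
  let i₁ : Fin n := ⟨1, by omega⟩
  let i₂ : Fin n := ⟨2, by omega⟩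
  have h01 : i₀ ≠ i₁ := by simp [i₀, i₁, Fin.ext_iff]
  have h02 : i₀ ≠ i₂ := by simp [i₀, i₂, Fin.ext_iff]
  have h12 : i₁ ≠ i₂ := by simp [i₁, i₂, Fin.ext_iff]
  have hδ := F.triple_product_mul_self h01 h02 h12
  obtain ⟨ε, hε, hQ⟩ := exists_signs_of_triple_products_eq (S := Finset.univ) F.symm
    (fun a b => F.Q_mul_self) hδ i₀ fun a _ b _ ha hb hab =>
      F.triple_products_eq_of_threeUniform hF hc ha hb hab h01 h02 h12
  exact ⟨_, mul_self_eq_one_iff.mp hδ, ε, hε,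
    fun a b => hQ a (Finset.mem_univ a) b (Finset.mem_univ b)⟩

lemma seidel_frameGraph : seidel (frameGraph F) = F.Q := by
  ext a b
  by_cases hab : a = b
  · subst hab
    simp [seidel, F.diag]
  · rcases F.offdiag a b hab with h | h <;> norm_num [seidel, frameGraph, hab, h]

lemma switchingEquivalent_frameGraph_of_signs {H : SimpleGraph (Fin n)} {δ : ℝ}
    {ε : Fin n → ℝ} (hε : ∀ a, ε a * ε a = 1) (hQ : ∀ a b, a ≠ b → F.Q a b = δ * (ε a * ε b))
    (hH : ∀ a b, a ≠ b → seidel H a b = δ) : SwitchingEquivalent (frameGraph F) H := by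
  refine ⟨Equiv.refl _, ε, fun a => mul_self_eq_one_iff.mp (hε a), fun a b => ?_⟩
  rw [Equiv.refl_apply, Equiv.refl_apply, F.seidel_frameGraph]
  by_cases hab : a = b
  · subst hab
    simp [seidel, F.diag]
  · rw [hH a b hab, hQ a b hab]
    linear_combination (-δ * ε b * ε b) * hε a - δ * hε b

lemma opNorm_erasure_of_Q_eq_Jmat_sub_one (hQ : F.Q = Jmat n - 1) {S : Finset (Fin n)}
    (hS : S.Nonempty) : opNorm (F.Vᵀ * diagS S * F.V) = k / n + c n k * (S.card - 1) :=
  F.opNorm_erasure_of_eq_mul hS (ε := fun _ => 1) (fun _ => one_mul 1) fun a _ b _ hab => by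
    simp [hQ, Jmat, one_apply_ne hab]

lemma opNorm_erasure_of_Q_eq_one_sub_Jmat (hQ : F.Q = 1 - Jmat n) {S : Finset (Fin n)}
    (hS : 1 < S.card) : opNorm (F.Vᵀ * diagS S * F.V) = k / n + c n k :=
  F.opNorm_erasure_of_eq_neg_mul hS (ε := fun _ => 1) (fun _ => one_mul 1) fun a _ b _ hab => by
    simp [hQ, Jmat, one_apply_ne hab]

end TwoUniformFrame

theorem statement8 (n : ℕ) (hn : 3 ≤ n) :
    (∀ F : TwoUniformFrame n 1, F.Q = Jmat n - 1 → ThreeUniform F) ∧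
    (∀ F : TwoUniformFrame n (n - 1), F.Q = 1 - Jmat n → ThreeUniform F) ∧
    (∀ k : ℕ, 1 ≤ k → k < n → ∀ F : TwoUniformFrame n k, ThreeUniform F →
      (k = 1 ∧ SwitchingEquivalent (frameGraph F) (⊥ : SimpleGraph (Fin n))) ∨
      (k = n - 1 ∧ SwitchingEquivalent (frameGraph F) (⊤ : SimpleGraph (Fin n)))) := by
  refine ⟨fun F hQ S T hS hT => ?_, fun F hQ S T hS hT => ?_, fun k hk hkn F hF => ?_⟩
  · rw [F.opNorm_erasure_of_Q_eq_Jmat_sub_one hQ (Finset.card_pos.mp (by omega)),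
      F.opNorm_erasure_of_Q_eq_Jmat_sub_one hQ (Finset.card_pos.mp (by omega)), hS, hT]
  · rw [F.opNorm_erasure_of_Q_eq_one_sub_Jmat hQ (by omega),
      F.opNorm_erasure_of_Q_eq_one_sub_Jmat hQ (by omega)]
  have hc : c n k ≠ 0 := (c_pos hk hkn).ne'
  obtain ⟨δ, hδ, ε, hε, hQ⟩ := F.exists_signs_of_threeUniform hF hc hn
  have hcoeff := F.two_mul_div_add_eq_one_of_signs (mul_self_eq_one_iff.mpr hδ) hε hQ
    (i := ⟨0, by omega⟩) (j := ⟨1, by omega⟩) (by simp [Fin.ext_iff]) hc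
  rcases eq_one_or_eq_sub_one_of_two_mul_div_add_eq_one hn hk hkn hδ hcoeff with
    ⟨rfl, hk1⟩ | ⟨rfl, hk1⟩
  · exact Or.inl ⟨hk1, F.switchingEquivalent_frameGraph_of_signs hε hQ fun a b hab => by
      simp [seidel, hab]⟩
  · exact Or.inr ⟨hk1, F.switchingEquivalent_frameGraph_of_signs hε hQ fun a b hab => by
      simp [seidel, hab]⟩

end FramesErasures
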